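/- arXiv:1505.07749 — 3 statements merged into one kernel-verified Lean document; each statement's English description precedes it below -/
import Mathlib

section
/- For every z ∈ ℂⁿ, the function V(z) := ½ log([1+|z|²] + √((1+|z|²)² − |1+z²|²)) satisfies V(z) ≥ ½ log|1+z²| whenever 1+z² ≠ 0, with equality if and only if z ∈ ℝⁿ. -/
/-!
Write `A = 1 + ∑ |z_j|²` and `w = 1 + ∑ z_j²`. Cauchy–Schwarz applied to the vectors `(Re z_j)`
and `(Im z_j)` gives `|w|² + 4 ∑ (Im z_j)² ≤ A²`, so `|w| ≤ A`, with equality exactly when `z` is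
real. Since `A + √(A² - |w|²) ≥ A ≥ |w|`, with equality throughout iff `A = |w|`, the claim follows
from the monotonicity and injectivity of `log`.
-/

open Finset

namespace Complex

variable {ι : Type*} [Fintype ι]

lemma re_sum_sq (z : ι → ℂ) : (∑ j, z j ^ 2).re = ∑ j, ((z j).re ^ 2 - (z j).im ^ 2) := by
  simp only [re_sum, sq, mul_re]

lemma im_sum_sq (z : ι → ℂ) : (∑ j, z j ^ 2).im = 2 * ∑ j, (z j).re * (z j).im := by
  simp only [im_sum, sq, mul_im, mul_sum]
  exact sum_congr rfl fun j _ ↦ by ring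

/-- With `P, Q, R` the sums of `re², im², re·im`, this is `(1+P-Q)² + 4R² + 4Q ≤ (1+P+Q)²`,
i.e. `R² ≤ P Q`, which is Cauchy–Schwarz. -/
lemma sq_norm_one_add_sum_sq_add_four_mul_sum_im_sq_le (z : ι → ℂ) :
    ‖1 + ∑ j, z j ^ 2‖ ^ 2 + 4 * ∑ j, (z j).im ^ 2 ≤ (1 + ∑ j, ‖z j‖ ^ 2) ^ 2 := by
  have hnorm : ∑ j, ‖z j‖ ^ 2 = ∑ j, (z j).re ^ 2 + ∑ j, (z j).im ^ 2 := by
    rw [← sum_add_distrib]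
    exact sum_congr rfl fun j _ ↦ by rw [Complex.sq_norm, normSq_apply]; ring
  have hCS := sum_mul_sq_le_sq_mul_sq univ (fun j ↦ (z j).re) (fun j ↦ (z j).im)
  have hre : 0 ≤ ∑ j, (z j).re ^ 2 := sum_nonneg fun j _ ↦ sq_nonneg _
  rw [Complex.sq_norm, normSq_apply, add_re, add_im, one_re, one_im, re_sum_sq, im_sum_sq,
    sum_sub_distrib, hnorm]
  nlinarith

lemma norm_one_add_sum_sq_le (z : ι → ℂ) : ‖1 + ∑ j, z j ^ 2‖ ≤ 1 + ∑ j, ‖z j‖ ^ 2 :=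
  calc ‖1 + ∑ j, z j ^ 2‖ ≤ ‖(1 : ℂ)‖ + ‖∑ j, z j ^ 2‖ := norm_add_le _ _
    _ ≤ 1 + ∑ j, ‖z j‖ ^ 2 := by
      rw [norm_one]
      gcongr
      exact norm_sum_le_of_le univ fun j _ ↦ (Complex.norm_pow _ _).le

lemma norm_one_add_sum_sq_eq_iff (z : ι → ℂ) :
    ‖1 + ∑ j, z j ^ 2‖ = 1 + ∑ j, ‖z j‖ ^ 2 ↔ ∀ j, (z j).im = 0 := by
  constructor
  · intro h
    have hdefect := sq_norm_one_add_sum_sq_add_four_mul_sum_im_sq_le z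
    rw [h] at hdefect
    have him : ∑ j, (z j).im ^ 2 = 0 :=
      le_antisymm (by linarith) (sum_nonneg fun j _ ↦ sq_nonneg _)
    intro j
    exact pow_eq_zero_iff two_ne_zero |>.mp <|
      (sum_eq_zero_iff_of_nonneg fun j _ ↦ sq_nonneg _).mp him j (mem_univ j)
  · intro h
    have hz : ∀ j, z j = ((z j).re : ℂ) := fun j ↦ ext rfl (h j)
    have hw : 1 + ∑ j, z j ^ 2 = ((1 + ∑ j, (z j).re ^ 2 : ℝ) : ℂ) := by
      push_cast
      exact congrArg _ (sum_congr rfl fun j _ ↦ by rw [← hz j])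
    rw [hw, norm_real, Real.norm_of_nonneg (by positivity)]
    congr 1
    exact sum_congr rfl fun j _ ↦ by rw [hz j, norm_real, Real.norm_eq_abs, sq_abs]; rfl

end Complex

namespace Real

lemma log_le_log_add_sqrt_sq_sub_sq {a b : ℝ} (hb : 0 < b) (hba : b ≤ a) :
    log b ≤ log (a + √(a ^ 2 - b ^ 2)) :=
  log_le_log hb (by linarith [sqrt_nonneg (a ^ 2 - b ^ 2)])

lemma log_add_sqrt_sq_sub_sq_eq_log_iff {a b : ℝ} (hb : 0 < b) (hba : b ≤ a) :
    log (a + √(a ^ 2 - b ^ 2)) = log b ↔ a = b := by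
  have hsqrt := sqrt_nonneg (a ^ 2 - b ^ 2)
  constructor
  · intro h
    have := log_injOn_pos (Set.mem_Ioi.mpr (by linarith)) (Set.mem_Ioi.mpr hb) h
    linarith
  · rintro rfl
    rw [sub_self, sqrt_zero, add_zero]

end Real

theorem extremal_ge_weight (n : ℕ) (z : Fin n → ℂ) (hz : 1 + ∑ j, (z j) ^ 2 ≠ 0) :
    (1 / 2) * Real.log (‖1 + ∑ j, (z j) ^ 2‖) ≤
      (1 / 2) * Real.log ((1 + ∑ j, (‖z j‖) ^ 2) +
        Real.sqrt ((1 + ∑ j, (‖z j‖) ^ 2) ^ 2 -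
          (‖1 + ∑ j, (z j) ^ 2‖) ^ 2)) ∧
    ((1 / 2) * Real.log ((1 + ∑ j, (‖z j‖) ^ 2) +
        Real.sqrt ((1 + ∑ j, (‖z j‖) ^ 2) ^ 2 -
          (‖1 + ∑ j, (z j) ^ 2‖) ^ 2)) =
      (1 / 2) * Real.log (‖1 + ∑ j, (z j) ^ 2‖) ↔ ∀ j, (z j).im = 0) := by
  have hpos : 0 < ‖1 + ∑ j, z j ^ 2‖ := norm_pos_iff.mpr hz
  have hle := Complex.norm_one_add_sum_sq_le z
  refine ⟨mul_le_mul_of_nonneg_left (Real.log_le_log_add_sqrt_sq_sub_sq hpos hle) (by norm_num), ?_⟩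
  rw [mul_right_inj' (by norm_num), Real.log_add_sqrt_sq_sub_sq_eq_log_iff hpos hle, eq_comm,
    Complex.norm_one_add_sum_sq_eq_iff]
end

section
/- For n = 1 and z ∈ ℂ, the formula ½ log([1+|z|²] + √((1+|z|²)² − |1+z²|²)) equals max(log|z−i|, log|z+i|). -/
/-!
Put `a = |z - i|` and `b = |z + i|`. Since `1 + z² = (z - i)(z + i)` and, by the parallelogram
law, `1 + |z|² = (a² + b²)/2`, the radicand is `((a² - b²)/2)²`, so the argument of the logarithm
is `max(a, b)²`. Taking `½ log` gives `log (max a b)`, which equals `max (log a) (log b)` because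
`a + b ≥ |2i| = 2` forces `max a b ≥ 1`; this also covers `z = ± i`, where `log 0 = 0`.
-/

open Complex

theorem half_sum_sq_add_sqrt_eq_max_sq {a b : ℝ} (ha : 0 ≤ a) (hb : 0 ≤ b) :
    (a ^ 2 + b ^ 2) / 2 + √(((a ^ 2 + b ^ 2) / 2) ^ 2 - (a * b) ^ 2) = max a b ^ 2 := by
  rw [show ((a ^ 2 + b ^ 2) / 2) ^ 2 - (a * b) ^ 2 = ((a ^ 2 - b ^ 2) / 2) ^ 2 by ring,
    Real.sqrt_sq_eq_abs]
  rcases le_total a b with h | h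
  · rw [max_eq_right h, abs_of_nonpos (by nlinarith)]; ring
  · rw [max_eq_left h, abs_of_nonneg (by nlinarith)]; ring

theorem Real.log_max_of_one_le_max {a b : ℝ} (ha : 0 ≤ a) (hb : 0 ≤ b) (h : 1 ≤ max a b) :
    Real.log (max a b) = max (Real.log a) (Real.log b) := by
  wlog hab : a ≤ b generalizing a b
  · rw [max_comm a, max_comm (Real.log a)]
    exact this hb ha (max_comm a b ▸ h) (le_of_not_ge hab)
  rw [max_eq_right hab] at h ⊢
  rcases ha.eq_or_lt with rfl | ha
  · rw [Real.log_zero, max_eq_right (Real.log_nonneg h)]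
  · rw [max_eq_right (Real.log_le_log ha hab)]

theorem norm_one_add_sq (z : ℂ) : ‖1 + z ^ 2‖ = ‖z - I‖ * ‖z + I‖ := by
  rw [← norm_mul]
  congr 1
  linear_combination I_sq

theorem one_add_norm_sq (z : ℂ) : 1 + ‖z‖ ^ 2 = (‖z - I‖ ^ 2 + ‖z + I‖ ^ 2) / 2 := by
  have := parallelogram_law_with_norm ℝ z I
  rw [norm_I] at this
  linarith

theorem one_le_max_norm_sub_I_norm_add_I (z : ℂ) : 1 ≤ max ‖z - I‖ ‖z + I‖ := by
  have : ‖(z + I) - (z - I)‖ ≤ ‖z + I‖ + ‖z - I‖ := norm_sub_le _ _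
  rw [add_sub_sub_cancel, ← two_mul, norm_mul, norm_I] at this
  norm_num at this
  linarith [le_max_left ‖z - I‖ ‖z + I‖, le_max_right ‖z - I‖ ‖z + I‖]

theorem one_var_formula (z : ℂ) :
    (1 / 2) * Real.log ((1 + ‖z‖ ^ 2) +
        Real.sqrt ((1 + ‖z‖ ^ 2) ^ 2 - ‖1 + z ^ 2‖ ^ 2)) =
      max (Real.log (‖z - Complex.I‖)) (Real.log (‖z + Complex.I‖)) := by
  rw [norm_one_add_sq, one_add_norm_sq,
    half_sum_sq_add_sqrt_eq_max_sq (norm_nonneg _) (norm_nonneg _), Real.log_pow,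
    Real.log_max_of_one_le_max (norm_nonneg _) (norm_nonneg _)
      (one_le_max_norm_sub_I_norm_add_I z)]
  push_cast
  ring
end

section
/- The function g(z) := ½ log(1 + √(1 − |1+z²|²/(1+|z|²)²)) on ℂⁿ satisfies g(z) ≤ ½ log 2 for all z, and sup over z ∈ ℂⁿ of g(z) equals ½ log 2; e.g., g(i(1/√n,...,1/√n)) = ½ log 2. -/
/-! The quotient under the square root is nonnegative, so the bound is immediate; it is attained
wherever `1 + z² = 0`, e.g. at `z = i u` for any real unit vector `u`. -/

open Complex

noncomputable def alexanderFunction {ι : Type*} [Fintype ι] (z : ι → ℂ) : ℝ :=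
  (1 / 2) * Real.log (1 + Real.sqrt (1 -
    ‖1 + ∑ j, z j ^ 2‖ ^ 2 / (1 + ∑ j, ‖z j‖ ^ 2) ^ 2))

lemma Real.log_one_add_sqrt_one_sub_le_log_two {a : ℝ} (ha : 0 ≤ a) :
    Real.log (1 + Real.sqrt (1 - a)) ≤ Real.log 2 := by
  have hsqrt : Real.sqrt (1 - a) ≤ 1 := Real.sqrt_le_one.mpr (by linarith)
  exact Real.log_le_log (by positivity) (by linarith)

lemma alexanderFunction_le {ι : Type*} [Fintype ι] (z : ι → ℂ) :
    alexanderFunction z ≤ (1 / 2) * Real.log 2 := by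
  have := Real.log_one_add_sqrt_one_sub_le_log_two
    (div_nonneg (sq_nonneg ‖1 + ∑ j, z j ^ 2‖) (sq_nonneg (1 + ∑ j, ‖z j‖ ^ 2)))
  unfold alexanderFunction
  linarith

lemma alexanderFunction_I_mul_ofReal_of_sum_sq_eq_one {ι : Type*} [Fintype ι] {u : ι → ℝ}
    (hu : ∑ j, u j ^ 2 = 1) :
    alexanderFunction (fun j => I * u j) = (1 / 2) * Real.log 2 := by
  have hsq : ∑ j, (I * u j) ^ 2 = -1 := by
    simp only [mul_pow, I_sq, neg_one_mul, Finset.sum_neg_distrib]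
    exact_mod_cast congrArg (fun x : ℝ => -(x : ℂ)) hu
  have hnorm : ∑ j, ‖I * u j‖ ^ 2 = 1 := by
    simpa only [norm_mul, norm_I, one_mul, norm_real, Real.norm_eq_abs, sq_abs] using hu
  simp only [alexanderFunction, hsq, hnorm]
  norm_num

theorem alexander_capacity (n : ℕ) (hn : 0 < n) :
    (∀ z : Fin n → ℂ,
      (1 / 2) * Real.log (1 + Real.sqrt (1 -
          (‖1 + ∑ j, (z j) ^ 2‖) ^ 2 /
            (1 + ∑ j, (‖z j‖) ^ 2) ^ 2)) ≤ (1 / 2) * Real.log 2) ∧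
    (1 / 2) * Real.log (1 + Real.sqrt (1 -
        (‖1 + ∑ j, ((fun _ : Fin n => Complex.I * (1 / Real.sqrt n)) j) ^ 2‖) ^ 2 /
          (1 + ∑ j, (‖(fun _ : Fin n => Complex.I * (1 / Real.sqrt n)) j‖) ^ 2) ^ 2)) =
      (1 / 2) * Real.log 2 := by
  have hunit : ∑ _j : Fin n, (1 / Real.sqrt n) ^ 2 = 1 := by
    simp [Real.sq_sqrt (Nat.cast_nonneg n), hn.ne']
  refine ⟨alexanderFunction_le, ?_⟩
  have h := alexanderFunction_I_mul_ofReal_of_sum_sq_eq_one hunit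
  rw [ofReal_div, ofReal_one] at h
  exact h
end
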